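/- arXiv:2004.11828 — 3 statements merged into one kernel-verified Lean document; each statement's English description precedes it below -/
import Mathlib

section
/- Let H be a 3-uniform hypergraph and suppose there is a vertex x whose link graph L(x) contains three pairwise vertex-disjoint edges e₁, e₂, e₃ such that every triple {x₁, x₂, x₃} with xᵢ ∈ eᵢ (i = 1,2,3) is a hyperedge of H. Then H contains a copy of the Fano plane. -/
/-- The lines of the Fano plane (projective plane over F₂) on seven points. -/
def fanoLines : Finset (Finset (Fin 7)) :=
  {{0, 1, 2}, {0, 3, 4}, {0, 5, 6}, {1, 3, 5}, {1, 4, 6}, {2, 3, 6}, {2, 4, 5}}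

/-- A 3-uniform hypergraph with hyperedge set `E` contains a copy of the Fano plane. -/
def ContainsFano {V : Type*} [DecidableEq V] (E : Set (Finset V)) : Prop :=
  ∃ f : Fin 7 → V, Function.Injective f ∧ ∀ l ∈ fanoLines, l.image f ∈ E

/-!
Write `e₁ = {a, b}`, `e₂ = {c, d}`, `e₃ = {e, f}` and send the points `0, …, 6` of the Fano plane
to `x, a, b, c, d, e, f`. The three lines through `0` go to the hyperedges `x ∪ eᵢ`, and the other
four lines `135, 146, 236, 245` go to the transversals `ace, adf, bcf, bde` of `e₁, e₂, e₃`.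
-/

open Finset

theorem Finset.injective_of_card_image_univ {α β : Type*} [Fintype α] [DecidableEq β]
    {f : α → β} (h : #(univ.image f) = Fintype.card α) : Function.Injective f :=
  Set.injOn_univ.mp <| by simpa using card_image_iff.mp h

theorem image_univ_seven_tuple {V : Type*} [DecidableEq V] (x a b c d e f : V) :
    univ.image ![x, a, b, c, d, e, f] = insert x ({a, b} ∪ {c, d} ∪ {e, f}) := by
  ext y
  simp [Fin.exists_fin_succ]
  tauto

theorem stmt_8_general {V : Type*} [DecidableEq V] (E : Set (Finset V))
    (x : V) (e₁ e₂ e₃ : Finset V)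
    (hc1 : e₁.card = 2) (hc2 : e₂.card = 2) (hc3 : e₃.card = 2)
    (hdisj : (insert x (e₁ ∪ e₂ ∪ e₃)).card = 7)
    (he₁ : insert x e₁ ∈ E) (he₂ : insert x e₂ ∈ E) (he₃ : insert x e₃ ∈ E)
    (hcross : ∀ x₁ ∈ e₁, ∀ x₂ ∈ e₂, ∀ x₃ ∈ e₃, ({x₁, x₂, x₃} : Finset V) ∈ E) :
    ContainsFano E := by
  obtain ⟨a, b, -, rfl⟩ := card_eq_two.mp hc1
  obtain ⟨c, d, -, rfl⟩ := card_eq_two.mp hc2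
  obtain ⟨e, f, -, rfl⟩ := card_eq_two.mp hc3
  refine ⟨![x, a, b, c, d, e, f], injective_of_card_image_univ ?_, ?_⟩
  · rw [image_univ_seven_tuple, hdisj, Fintype.card_fin]
  · intro l hl
    fin_cases hl <;> simp only [image_insert, image_singleton, Matrix.cons_val]
    exacts [he₁, he₂, he₃, hcross a (by simp) c (by simp) e (by simp),
      hcross a (by simp) d (by simp) f (by simp), hcross b (by simp) c (by simp) f (by simp),
      hcross b (by simp) d (by simp) e (by simp)]

theorem stmt_8 {V : Type*} [DecidableEq V] (E : Set (Finset V))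
    (h3 : ∀ e ∈ E, e.card = 3) (x : V) (e₁ e₂ e₃ : Finset V)
    (hc1 : e₁.card = 2) (hc2 : e₂.card = 2) (hc3 : e₃.card = 2)
    (hdisj : (insert x (e₁ ∪ e₂ ∪ e₃)).card = 7)
    (he₁ : insert x e₁ ∈ E) (he₂ : insert x e₂ ∈ E) (he₃ : insert x e₃ ∈ E)
    (hcross : ∀ x₁ ∈ e₁, ∀ x₂ ∈ e₂, ∀ x₃ ∈ e₃, ({x₁, x₂, x₃} : Finset V) ∈ E) :
    ContainsFano E :=
  stmt_8_general E x e₁ e₂ e₃ hc1 hc2 hc3 hdisj he₁ he₂ he₃ hcross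
end

section
/- Every loopless multigraph on n ≥ 4 vertices in which every set of four vertices spans at most 20 edges (counted with multiplicity) has at most 3·C(n,2) + n − 2 edges. -/
/-!
Double counting: for a loopless multigraph on a vertex set `S`, summing the edge counts of the
sets `S \ {v}` over `v ∈ S` counts every edge `#S - 2` times. So if every `n`-set spans at most
`f n` edges, every `(n + 1)`-set spans at most `(n + 1) f(n) / (n - 1)` edges. For
`f n = 3 C(n, 2) + n - 2` this is `3 C(n + 1, 2) + n - 2 / (n - 1)`, whose integer part is at
most `f (n + 1)`; induction from `f 4 = 20` finishes the proof.
-/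

open Finset

theorem Finset.sum_sum_sym2_erase {V M : Type*} [DecidableEq V] [AddCommMonoid M]
    (w : Sym2 V → M) (hloop : ∀ v, w (Sym2.diag v) = 0) (S : Finset V) :
    ∑ v ∈ S, ∑ p ∈ (S.erase v).sym2, w p = (#S - 2) • ∑ p ∈ S.sym2, w p := by
  have hswap : ∀ v p, v ∈ S ∧ p ∈ (S.erase v).sym2 ↔ v ∈ S \ p.toFinset ∧ p ∈ S.sym2 := by
    intro v p
    simp only [mem_sym2_iff, mem_erase, mem_sdiff, Sym2.mem_toFinset]
    grind
  rw [sum_comm' hswap, smul_sum]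
  refine sum_congr rfl fun p hp => ?_
  rw [sum_const, card_sdiff_of_subset fun v hv => mem_sym2_iff.1 hp v (Sym2.mem_toFinset.1 hv)]
  by_cases hdiag : p.IsDiag
  · rw [← Sym2.diag_diagElem hdiag, hloop, smul_zero, smul_zero]
  · rw [Sym2.card_toFinset_of_not_isDiag p hdiag]

def furediKundgenBound (n : ℕ) : ℕ := 3 * n.choose 2 + n - 2

theorem le_furediKundgenBound_succ_of_mul_le {n M : ℕ} (hn : 2 ≤ n)
    (h : (n - 1) * M ≤ (n + 1) * furediKundgenBound n) :
    M ≤ furediKundgenBound (n + 1) := by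
  unfold furediKundgenBound at *
  obtain ⟨k, rfl⟩ := Nat.exists_eq_add_of_le' hn
  have hc : (k + 2).choose 2 * 2 = (k + 2) * (k + 1) := by
    simpa using (Nat.add_one_mul_choose_eq (k + 1) 1).symm
  have hsucc : (k + 2 + 1).choose 2 = (k + 2).choose 2 + (k + 2) := by
    rw [Nat.choose_succ_succ', Nat.choose_one_right, add_comm]
  rw [show k + 2 - 1 = k + 1 by omega,
    show 3 * (k + 2).choose 2 + (k + 2) - 2 = 3 * (k + 2).choose 2 + k by omega] at h
  suffices M < 3 * (k + 2).choose 2 + 4 * k + 8 by omega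
  by_contra! hM
  nlinarith [Nat.mul_le_mul_left (k + 1) hM]

theorem sum_sym2_le_furediKundgenBound {V : Type*} [DecidableEq V] (w : Sym2 V → ℕ)
    (hloop : ∀ v, w (Sym2.diag v) = 0)
    (hspan : ∀ S : Finset V, #S = 4 → ∑ p ∈ S.sym2, w p ≤ 20)
    (S : Finset V) (hS : 4 ≤ #S) :
    ∑ p ∈ S.sym2, w p ≤ furediKundgenBound #S := by
  generalize hcard : #S = n at hS ⊢
  induction n, hS using Nat.le_induction generalizing S with
  | base => exact hspan S hcard
  | succ n hn ih =>
    have herase : ∀ v ∈ S, ∑ p ∈ (S.erase v).sym2, w p ≤ furediKundgenBound n := fun v hv =>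
      ih (S.erase v) (by rw [card_erase_of_mem hv, hcard, Nat.add_sub_cancel])
    have hcount := sum_le_card_nsmul S _ _ herase
    rw [sum_sum_sym2_erase w hloop, hcard, smul_eq_mul, smul_eq_mul] at hcount
    exact le_furediKundgenBound_succ_of_mul_le (by omega) hcount

theorem stmt_10 {V : Type*} [Fintype V] [DecidableEq V] (mult : Sym2 V → ℕ)
    (hloop : ∀ v, mult (Sym2.diag v) = 0) (n : ℕ) (hn : Fintype.card V = n)
    (h4 : 4 ≤ n)
    (hspan : ∀ S : Finset V, S.card = 4 → ∑ p ∈ S.sym2, mult p ≤ 20) :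
    ∑ p : Sym2 V, mult p ≤ 3 * n.choose 2 + n - 2 := by
  have h := sum_sym2_le_furediKundgenBound mult hloop hspan univ (by rwa [card_univ, hn])
  rwa [sym2_univ, card_univ, hn] at h
end

section
/- A balanced complete bipartite 3-uniform hypergraph construction is Fano-free: let V = A ∪ B be a partition of a finite set V, and let B_V be the 3-uniform hypergraph whose hyperedges are all 3-element subsets of V meeting both A and B. Then B_V contains no copy of the Fano plane. -/
set_option maxRecDepth 4000 in
lemma fano_mono : ∀ c : Fin 7 → Bool, ∃ l ∈ fanoLines,
    (∀ i ∈ l, c i = true) ∨ (∀ i ∈ l, c i = false) := by decide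

theorem stmt_17 {V : Type*} [DecidableEq V] (A B : Set V)
    (hU : A ∪ B = Set.univ) (hd : Disjoint A B) :
    ¬ ContainsFano {e : Finset V |
        e.card = 3 ∧ (∃ x ∈ e, x ∈ A) ∧ (∃ x ∈ e, x ∈ B)} := by
  rintro ⟨f, hf, hE⟩
  classical
  obtain ⟨l, hl, hmono⟩ := fano_mono (fun i => decide (f i ∈ A))
  obtain ⟨-, ⟨xA, hxA, hA⟩, ⟨xB, hxB, hB⟩⟩ := hE l hl
  rcases hmono with h | h
  · obtain ⟨i, hi, rfl⟩ := Finset.mem_image.mp hxB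
    have : f i ∈ A := by simpa using h i hi
    exact hd.le_bot ⟨this, hB⟩
  · obtain ⟨i, hi, rfl⟩ := Finset.mem_image.mp hxA
    have : f i ∉ A := by simpa using h i hi
    exact this hA
end
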